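/- Let Γ = (G, σ) be a signed graph on n vertices with frustration index l(Γ), and let 1 ≤ k ≤ n−1. Then the frustration index of its k-token signed graph satisfies l(Γ) ≤ l(F_k(Γ)) ≤ C(n−2, k−1)·l(Γ). -/

import Mathlib

open scoped Classical

/-- A signed graph: a simple graph together with a signature assigning a sign `±1`
(an element of `ℤˣ`) to each pair of vertices (only the values on edges are relevant). -/
structure SignedGraph (V : Type*) where
  G : SimpleGraph V
  sign : V → V → ℤˣ
  sign_symm : ∀ u v, sign u v = sign v u

namespace SignedGraph

variable {V W : Type*}

/-- The sign function, as a function on unordered pairs. -/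
def esign (Γ : SignedGraph V) : Sym2 V → ℤˣ :=
  Sym2.lift ⟨Γ.sign, Γ.sign_symm⟩

/-- The sign of a walk: the product of the signs of its edges. -/
def walkSign (Γ : SignedGraph V) {u v : V} (p : Γ.G.Walk u v) : ℤˣ :=
  (p.edges.map Γ.esign).prod

/-- A signed graph is balanced if every cycle is positive. -/
def Balanced (Γ : SignedGraph V) : Prop :=
  ∀ ⦃u : V⦄ (p : Γ.G.Walk u u), p.IsCycle → Γ.walkSign p = 1

/-- Switching at a vertex subset `U`: reverse the sign of every edge with exactly one
endpoint in `U`. -/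
noncomputable def switch (Γ : SignedGraph V) (U : Set V) : SignedGraph V where
  G := Γ.G
  sign u v := (if u ∈ U then (-1 : ℤˣ) else 1) * (if v ∈ U then (-1 : ℤˣ) else 1) * Γ.sign u v
  sign_symm u v := by
    rw [Γ.sign_symm u v, mul_comm (if u ∈ U then (-1 : ℤˣ) else 1) (if v ∈ U then (-1 : ℤˣ) else 1)]

/-- Two signed graphs on the same vertex set are "the same signed graph" when they have the
same underlying graph and the same signature on every edge. -/
def SEq (Γ Γ' : SignedGraph V) : Prop :=
  Γ.G = Γ'.G ∧ ∀ u v, Γ.G.Adj u v → Γ.sign u v = Γ'.sign u v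

/-- Switching equivalence of two signed graphs on the same vertex set. -/
def SwitchEquiv (Γ Γ' : SignedGraph V) : Prop :=
  ∃ U : Set V, (Γ.switch U).SEq Γ'

/-- A sign-preserving isomorphism of signed graphs. -/
structure Iso (Γ : SignedGraph V) (Γ' : SignedGraph W) where
  toEquiv : V ≃ W
  adj_iff : ∀ u v, Γ.G.Adj u v ↔ Γ'.G.Adj (toEquiv u) (toEquiv v)
  sign_eq : ∀ u v, Γ.G.Adj u v → Γ.sign u v = Γ'.sign (toEquiv u) (toEquiv v)

/-- Switching isomorphism: `Γ'` is isomorphic to a switching of `Γ`. -/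
def SwitchIso (Γ : SignedGraph V) (Γ' : SignedGraph W) : Prop :=
  ∃ U : Set V, Nonempty ((Γ.switch U).Iso Γ')

/-- The negation of a signed graph: all edge signs reversed. -/
def neg (Γ : SignedGraph V) : SignedGraph V where
  G := Γ.G
  sign u v := -Γ.sign u v
  sign_symm u v := by rw [Γ.sign_symm]

variable [DecidableEq V]

/-- The underlying graph of the `k`-token graph: vertices are the `k`-subsets of `V`,
with `A ~ B` when `A Δ B = {a, b}`, `a ∈ A`, `b ∈ B` and `a ~ b` in `G`. -/
def tokenAdj (G : SimpleGraph V) (k : ℕ) : SimpleGraph {A : Finset V // A.card = k} where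
  Adj A B := ∃ a b, a ∈ A.1 ∧ b ∈ B.1 ∧ G.Adj a b ∧ symmDiff A.1 B.1 = {a, b}
  symm := by
    constructor
    rintro A B ⟨a, b, ha, hb, hab, hs⟩
    exact ⟨b, a, hb, ha, hab.symm, by rw [symmDiff_comm, hs, Finset.pair_comm]⟩
  loopless := by
    constructor
    rintro A ⟨a, b, ha, hb, hab, hs⟩
    rw [symmDiff_self] at hs
    have h : a ∈ ({a, b} : Finset V) := Finset.mem_insert_self a {b}
    rw [← hs] at h
    simp at h

/-- The `k`-token signed graph: the edge obtained by moving a token along `ab`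
carries the sign of `ab`. -/
def token (Γ : SignedGraph V) (k : ℕ) : SignedGraph {A : Finset V // A.card = k} where
  G := tokenAdj Γ.G k
  sign A B := ∏ a ∈ A.1 \ B.1, ∏ b ∈ B.1 \ A.1, Γ.sign a b
  sign_symm A B := by
    rw [Finset.prod_comm]
    exact Finset.prod_congr rfl fun b _ => Finset.prod_congr rfl fun a _ => Γ.sign_symm a b

/-- The signed adjacency matrix (over `ℝ`). -/
noncomputable def adjMatrix (Γ : SignedGraph V) [Fintype V] : Matrix V V ℝ :=
  Matrix.of fun u v => if Γ.G.Adj u v then ((Γ.sign u v : ℤ) : ℝ) else 0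

/-- The signed Laplacian matrix `L = D - A` (over `ℝ`). -/
noncomputable def lapMatrix (Γ : SignedGraph V) [Fintype V] : Matrix V V ℝ :=
  Matrix.diagonal (fun v => (Γ.G.degree v : ℝ)) - Γ.adjMatrix

/-- The quantity `ℓ_m(Γ)`. -/
noncomputable def ellm (Γ : SignedGraph V) [Fintype V] (m : ℕ) : ℝ :=
  (∑ r ∈ Finset.range (m + 1),
      ((Γ.G.adjMatrix ℝ ^ r).trace - (Γ.adjMatrix ^ r).trace)) /
  (∑ r ∈ Finset.range (m + 1),
      ((Γ.G.adjMatrix ℝ ^ r).trace + |(Γ.adjMatrix ^ r).trace|))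

/-- The unbalance level `ℓ(Γ) = max {ℓ_{n-1}(Γ), ℓ_n(Γ)}`. -/
noncomputable def unbalanceLevel (Γ : SignedGraph V) [Fintype V] : ℝ :=
  max (Γ.ellm (Fintype.card V - 1)) (Γ.ellm (Fintype.card V))

/-- The frustration index: the minimum number of negative edges whose deletion yields a
balanced signed graph. -/
noncomputable def frustrationIndex (Γ : SignedGraph V) : ℕ :=
  sInf {m : ℕ | ∃ F : Finset (Sym2 V), F.card = m ∧ ↑F ⊆ Γ.G.edgeSet ∧
    (∀ e ∈ F, Γ.esign e = -1) ∧
    Balanced ⟨Γ.G.deleteEdges ↑F, Γ.sign, Γ.sign_symm⟩}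

/-- The signed complement of a balanced signed graph, with respect to a switching function
`s` witnessing balance (`A_σ = S A S`): the signed graph on the complement graph with
adjacency matrix `S Ā S`, i.e. with sign `s u * s v` on each complement edge. -/
def scompl (Γ : SignedGraph V) (s : V → ℤˣ) : SignedGraph V where
  G := Γ.Gᶜ
  sign u v := s u * s v
  sign_symm u v := mul_comm _ _

/-- The real diagonal `±1` matrix associated with `s : V → ℤˣ`. -/
noncomputable def diagS [Fintype V] (s : V → ℤˣ) : Matrix V V ℝ :=
  Matrix.diagonal fun v => ((s v : ℤ) : ℝ)

end SignedGraph

/-- The all-positive signed complete graph on `V`. -/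
def allPos (V : Type*) : SignedGraph V := ⟨⊤, fun _ _ => 1, fun _ _ => rfl⟩

/-- The `(n; 1, k)`-binomial matrix. -/
noncomputable def binomB (V : Type*) [Fintype V] [DecidableEq V] (k : ℕ) :
    Matrix {A : Finset V // A.card = k} V ℝ :=
  Matrix.of fun A v => if v ∈ A.1 then 1 else 0

/-- The `(n; k₁, k₂)`-binomial matrix. -/
noncomputable def binomB2 (V : Type*) [Fintype V] [DecidableEq V] (k₁ k₂ : ℕ) :
    Matrix {A : Finset V // A.card = k₂} {A : Finset V // A.card = k₁} ℝ :=
  Matrix.of fun A X => if X.1 ⊆ A.1 then 1 else 0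


/-!
Upper bound: if deleting the negative edges `F` balances `Γ`, with switching function `s`, then
deleting the `C(n-2, k-1) · |F|` token edges lying over `F` leaves the token graph of a balanced
graph, which is balanced by `A ↦ ∏ v ∈ A, s v`.

Lower bound: take a minimum balancing set `F'` of `F_k(Γ)`, a switching function `S` of the rest,
and let `F` be the edges of `Γ` under `F'`, so `|F| ≤ |F'|`. Every edge `ab` of `Γ - F` then has
`σ(ab) = S(T + a) S(T + b)` for all `(k-1)`-sets `T` avoiding `a, b`. On a cycle of length `m`,
park `k + 1 - m` tokens off the cycle (possible as `k < n`), then park tokens on cycle vertices one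
at a time, each time merging the two moves through that vertex into one. When a single token is
left moving, the signs along the cycle telescope to `1`.
-/

lemma Finset.symmDiff_insert_insert {α : Type*} [DecidableEq α] {a b : α} {T : Finset α}
    (ha : a ∉ T) (hb : b ∉ T) (hab : a ≠ b) : symmDiff (insert a T) (insert b T) = {a, b} := by
  ext x
  simp only [Finset.mem_symmDiff, Finset.mem_insert, Finset.mem_singleton]
  grind

lemma Sym2.toFinset_injective {α : Type*} [DecidableEq α] :
    Function.Injective (Sym2.toFinset : Sym2 α → Finset α) :=
  fun _ _ h => Sym2.ext fun x => by rw [← Sym2.mem_toFinset, h, Sym2.mem_toFinset]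

namespace SignedGraph

open SimpleGraph

section WalkSign

variable {V : Type*} (Γ : SignedGraph V)

@[simp] lemma esign_mk (a b : V) : Γ.esign s(a, b) = Γ.sign a b := rfl

@[simp] lemma walkSign_nil (u : V) : Γ.walkSign (Walk.nil : Γ.G.Walk u u) = 1 := rfl

@[simp] lemma walkSign_cons {u v w : V} (h : Γ.G.Adj u v) (p : Γ.G.Walk v w) :
    Γ.walkSign (Walk.cons h p) = Γ.sign u v * Γ.walkSign p := by
  simp [walkSign]

@[simp] lemma walkSign_append {u v w : V} (p : Γ.G.Walk u v) (q : Γ.G.Walk v w) :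
    Γ.walkSign (p.append q) = Γ.walkSign p * Γ.walkSign q := by
  simp [walkSign, Walk.edges_append]

@[simp] lemma walkSign_reverse {u v : V} (p : Γ.G.Walk u v) :
    Γ.walkSign p.reverse = Γ.walkSign p := by
  simp [walkSign, Walk.edges_reverse, List.prod_reverse]

lemma walkSign_eq_prod_darts {u v : V} (p : Γ.G.Walk u v) :
    Γ.walkSign p = (p.darts.map fun d => Γ.sign d.fst d.snd).prod := by
  simp only [walkSign, Walk.edges, List.map_map]
  rfl

def IsPotential (s : V → ℤˣ) : Prop :=
  ∀ u v, Γ.G.Adj u v → Γ.sign u v = s u * s v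

variable {Γ}

lemma IsPotential.walkSign_eq {s : V → ℤˣ} (hs : Γ.IsPotential s) {u v : V}
    (p : Γ.G.Walk u v) : Γ.walkSign p = s u * s v := by
  induction p with
  | nil => simp
  | @cons a b c h q ih =>
    rw [walkSign_cons, ih, hs a b h, mul_assoc, ← mul_assoc (s b), Int.units_mul_self, one_mul]

lemma IsPotential.balanced {s : V → ℤˣ} (hs : Γ.IsPotential s) : Γ.Balanced := fun u p _ => by
  rw [hs.walkSign_eq, Int.units_mul_self]

lemma Balanced.walkSign_cons_eq_one (hb : Γ.Balanced) {u v : V} (h : Γ.G.Adj u v)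
    {q : Γ.G.Walk v u} (hq : q.IsPath) : Γ.walkSign (Walk.cons h q) = 1 := by
  by_cases he : s(u, v) ∈ q.edges
  · cases q with
    | nil => exact absurd h (Γ.G.loopless.irrefl u)
    | @cons _ w _ h' q' =>
      rw [Walk.cons_isPath_iff] at hq
      rw [Walk.edges_cons, List.mem_cons] at he
      rcases he with he | he
      · obtain rfl : w = u := by
          rcases Sym2.eq_iff.1 he with ⟨rfl, -⟩ | ⟨rfl, -⟩
          exacts [absurd h (Γ.G.loopless.irrefl _), rfl]
        obtain rfl := (Walk.isPath_iff_nil.1 hq.1).eq_nil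
        simp [Γ.sign_symm v, Int.units_mul_self]
      · exact absurd (Walk.snd_mem_support_of_mem_edges q' he) hq.2
  · exact hb _ ((Walk.cons_isCycle_iff q h).2 ⟨hq, he⟩)

/-- Bypassing a closed sub-walk removes a path closed up by one edge, which has sign one. -/
lemma Balanced.walkSign_bypass (hb : Γ.Balanced) {u v : V} (p : Γ.G.Walk u v) :
    Γ.walkSign p.bypass = Γ.walkSign p := by
  induction p with
  | nil => rfl
  | @cons u w v h p ih =>
    rw [Walk.bypass]
    split_ifs with hu
    · have hsplit := congrArg Γ.walkSign (p.bypass.take_spec hu)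
      rw [walkSign_append] at hsplit
      rw [walkSign_cons, ← ih, ← hsplit, ← mul_assoc, ← walkSign_cons Γ h,
        hb.walkSign_cons_eq_one h (p.bypass_isPath.takeUntil hu), one_mul]
    · rw [walkSign_cons, walkSign_cons, ih]

lemma Balanced.walkSign_eq_one (hb : Γ.Balanced) {u : V} (p : Γ.G.Walk u u) :
    Γ.walkSign p = 1 := by
  rw [← hb.walkSign_bypass, (Walk.isPath_iff_nil.1 p.bypass_isPath).eq_nil, walkSign_nil]

lemma Balanced.exists_isPotential (hb : Γ.Balanced) : ∃ s, Γ.IsPotential s := by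
  let root (v : V) := (Γ.G.connectedComponentMk v).out
  have hreach (v : V) : Γ.G.Reachable (root v) v := ConnectedComponent.eq.mp (Quot.out_eq _)
  refine ⟨fun v => Γ.walkSign (hreach v).some, fun u v h => ?_⟩
  have key : ∀ {r r' : V}, r = r' → ∀ (pu : Γ.G.Walk r u) (pv : Γ.G.Walk r' v),
      Γ.sign u v = Γ.walkSign pu * Γ.walkSign pv := by
    rintro r _ rfl pu pv
    have hloop := hb.walkSign_eq_one (pu.append (Walk.cons h pv.reverse))
    rw [walkSign_append, walkSign_cons, walkSign_reverse] at hloop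
    rw [← Int.units_inv_eq_self (_ * _), eq_inv_iff_mul_eq_one, ← hloop]
    ac_rfl
  exact key (by simp only [root, ConnectedComponent.connectedComponentMk_eq_of_adj h]) _ _

end WalkSign

section Frustration

variable {V : Type*} (Γ : SignedGraph V)

def deleteEdges (F : Set (Sym2 V)) : SignedGraph V :=
  ⟨Γ.G.deleteEdges F, Γ.sign, Γ.sign_symm⟩

def IsBalancingSet (F : Finset (Sym2 V)) : Prop :=
  ↑F ⊆ Γ.G.edgeSet ∧ (∀ e ∈ F, Γ.esign e = -1) ∧ (Γ.deleteEdges ↑F).Balanced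

variable {Γ}

lemma IsBalancingSet.frustrationIndex_le {F : Finset (Sym2 V)} (hF : Γ.IsBalancingSet F) :
    Γ.frustrationIndex ≤ F.card :=
  Nat.sInf_le ⟨F, rfl, hF⟩

variable (Γ) [Fintype V]

lemma isBalancingSet_negativeEdges :
    Γ.IsBalancingSet (Γ.G.edgeFinset.filter (Γ.esign · = -1)) := by
  refine ⟨by simp, fun e he => (Finset.mem_filter.1 he).2, IsPotential.balanced (s := 1) ?_⟩
  rintro u v ⟨huv, hneg⟩
  rcases Int.units_eq_one_or (Γ.sign u v) with h | h
  · simp [deleteEdges, h]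
  · exact absurd (by simpa [huv, huv.ne] using h) hneg

lemma exists_isBalancingSet_card_eq :
    ∃ F, Γ.IsBalancingSet F ∧ F.card = Γ.frustrationIndex := by
  obtain ⟨F, hcard, hF⟩ : Γ.frustrationIndex ∈ {m | ∃ F, F.card = m ∧ Γ.IsBalancingSet F} :=
    Nat.sInf_mem (s := {m | ∃ F, F.card = m ∧ Γ.IsBalancingSet F})
      ⟨_, _, rfl, Γ.isBalancingSet_negativeEdges⟩
  exact ⟨F, hF, hcard⟩

end Frustration

section MoveSign

variable {V : Type*} {Δ : SignedGraph V}

lemma prod_map_snd_eq_of_isChain (g : V → ℤˣ) :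
    ∀ (l : List (V × ℤˣ)) (p z : V × ℤˣ),
      List.IsChain (fun x y => x.2 = g x.1 * g y.1) (p :: l ++ [z]) →
      ((p :: l).map Prod.snd).prod = g p.1 * g z.1
  | [], p, z, h => by simpa using h
  | q :: l, p, z, h => by
    simp only [List.cons_append, List.isChain_cons_cons] at h
    rw [List.map_cons, List.prod_cons, prod_map_snd_eq_of_isChain g l q z h.2, h.1,
      mul_assoc, ← mul_assoc (g q.1), Int.units_mul_self, one_mul]

lemma isChain_darts_append {P : V → V → ℤˣ → Prop} (hP : ∀ a b, Δ.G.Adj a b → P a b (Δ.sign a b))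
    {x z : V} (p : Δ.G.Walk x z) (t : ℤˣ) :
    List.IsChain (fun q r => P q.1 r.1 q.2)
      (p.darts.map (fun d => (d.fst, Δ.sign d.fst d.snd)) ++ [(z, t)]) := by
  induction p with
  | nil => simp
  | cons h q ih =>
    rw [Walk.darts_cons, List.map_cons, List.cons_append, List.isChain_cons]
    refine ⟨?_, ih⟩
    cases q <;> simpa using hP _ _ h

variable [DecidableEq V] (S : Finset V → ℤˣ) (k : ℕ)

/-- Whenever the other `k - 1` tokens occupy a set `T ⊇ R`, moving the last token from `a` to `b`
multiplies the potential `S` of the configuration by `s`. -/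
def IsMoveSign (R : Finset V) (a b : V) (s : ℤˣ) : Prop :=
  ∀ T, R ⊆ T → T.card + 1 = k → a ∉ T → b ∉ T → s = S (insert a T) * S (insert b T)

variable {S k} {R R' : Finset V} {a b c : V} {s t : ℤˣ}

lemma IsMoveSign.mono (h : IsMoveSign S k R a b s) (hR : R ⊆ R') : IsMoveSign S k R' a b s :=
  fun T hT => h T (hR.trans hT)

/-- Two consecutive moves `a → b → c` compose to a move `a → c` once a token is parked on `b`. -/
lemma IsMoveSign.trans (h₁ : IsMoveSign S k R a b s) (h₂ : IsMoveSign S k R b c t)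
    (hab : a ≠ b) (hbc : b ≠ c) (hac : a ≠ c) (hbR : b ∉ R) :
    IsMoveSign S k (insert b R) a c (s * t) := by
  intro T hRT hT haT hcT
  have hbT : b ∈ T := hRT (Finset.mem_insert_self b R)
  have hR : R ⊆ T.erase b := fun x hx =>
    Finset.mem_erase.2 ⟨fun h => hbR (h ▸ hx), hRT (Finset.mem_insert_of_mem hx)⟩
  have hcard : (T.erase b).card + 1 + 1 = k := by
    rw [Finset.card_erase_add_one hbT, hT]
  have hbe : b ∉ T.erase b := Finset.notMem_erase b T
  rw [h₁ (insert c (T.erase b)) (hR.trans (Finset.subset_insert _ _))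
      (by rw [Finset.card_insert_of_notMem (fun h => hcT (Finset.mem_of_mem_erase h)), hcard])
      (by simp [hac, haT]) (by simp [hbc, hbe]),
    h₂ (insert a (T.erase b)) (hR.trans (Finset.subset_insert _ _))
      (by rw [Finset.card_insert_of_notMem (fun h => haT (Finset.mem_of_mem_erase h)), hcard])
      (by simp [hab.symm, hbe]) (by simp [hac.symm, hcT]),
    Finset.insert_comm b c, Finset.insert_comm b a, Finset.insert_erase hbT, Finset.insert_comm a c,
    mul_comm (S (insert a T)), mul_mul_mul_comm, Int.units_mul_self, one_mul, mul_comm]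

/-- A closed sequence of moves `y → ⋯ → y` whose vertices avoid the parked tokens `R` has total
sign one, provided there is room for the `k - |R|` moving tokens on it. -/
theorem IsMoveSign.prod_eq_one :
    ∀ (l : List (V × ℤˣ)) (R : Finset V) (y : V) (s t : ℤˣ),
      (((y, s) :: l).map Prod.fst).Nodup → (∀ x ∈ ((y, s) :: l).map Prod.fst, x ∉ R) →
      R.card < k → k ≤ R.card + l.length →
      List.IsChain (fun p q => IsMoveSign S k R p.1 q.1 p.2) ((y, s) :: l ++ [(y, t)]) →
      (((y, s) :: l).map Prod.snd).prod = 1 := by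
  intro l
  induction l with
  | nil => intro R y s t _ _ hR hk; simp at hk; omega
  | cons q l ih =>
    intro R y s t hnd hR hRk hk hchain
    rcases Nat.lt_or_ge (R.card + 1) k with hlt | hge
    · -- park a token on `q.1` and merge the moves into and out of it
      cases l with
      | nil => simp at hk; omega
      | cons r l =>
        simp only [List.cons_append, List.isChain_cons_cons] at hchain
        obtain ⟨h₁, h₂, hrest⟩ := hchain
        simp only [List.map_cons, List.nodup_cons, List.mem_cons, not_or] at hnd
        simp only [List.map_cons, List.mem_cons, forall_eq_or_imp] at hR
        have hR' : R ⊆ insert q.1 R := Finset.subset_insert _ _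
        have := ih (insert q.1 R) y (s * q.2) t (by simp [hnd])
          (by simp only [List.map_cons, List.mem_cons, Finset.mem_insert]; grind)
          (by rw [Finset.card_insert_of_notMem hR.2.1]; omega)
          (by rw [Finset.card_insert_of_notMem hR.2.1]; simp at hk ⊢; omega)
          (by
            simp only [List.cons_append, List.isChain_cons_cons]
            exact ⟨(h₁.trans h₂ hnd.1.1 hnd.2.1.1 hnd.1.2.1 hR.2.1).mono le_rfl,
              hrest.imp fun _ _ h => h.mono hR'⟩)
        simpa [mul_assoc] using this
    · have hout : ∀ p ∈ (y, s) :: q :: l ++ [(y, t)], p.1 ∉ R := by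
        intro p hp
        simp only [List.map_cons, List.mem_cons, forall_eq_or_imp, List.mem_map] at hR
        simp only [List.cons_append, List.mem_cons, List.mem_append] at hp
        grind
      rw [prod_map_snd_eq_of_isChain (fun x => S (insert x R)) _ _ (y, t)
        (hchain.imp_of_mem_imp fun p p' hp hp' h => h R subset_rfl (by omega) (hout p hp)
          (hout p' hp')), Int.units_mul_self]

theorem balanced_of_isMoveSign [Fintype V] {S : Finset V → ℤˣ} (hk : 1 ≤ k)
    (hkn : k < Fintype.card V) (hS : ∀ a b, Δ.G.Adj a b → IsMoveSign S k ∅ a b (Δ.sign a b)) :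
    Δ.Balanced := by
  rintro u (_ | ⟨h, q⟩) hp
  · exact absurd hp Walk.not_isCycle_nil
  let f (d : Δ.G.Dart) : V × ℤˣ := (d.fst, Δ.sign d.fst d.snd)
  have hsign : Δ.walkSign (Walk.cons h q) = (((Walk.cons h q).darts.map f).map Prod.snd).prod := by
    rw [walkSign_eq_prod_darts, List.map_map]
    rfl
  have hvs : ((Walk.cons h q).darts.map f).map Prod.fst = (Walk.cons h q).support.dropLast := by
    rw [List.map_map, ← Walk.map_fst_darts]
    rfl
  have hnd := hp.nodup_dropLast_support
  have hlen : (Walk.cons h q).support.dropLast.length = q.length + 1 := by simp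
  have hm := hnd.length_le_card
  have h3 : 3 ≤ q.length + 1 := hp.three_le_length
  -- park `k + 1 - m` tokens off the `m`-cycle, leaving between `1` and `m - 1` to move along it
  obtain ⟨B, hBsub, hBcard⟩ := Finset.exists_subset_card_eq
    (s := Finset.univ \ (Walk.cons h q).support.dropLast.toFinset) (n := k + 1 - (q.length + 1))
    (by rw [Finset.card_sdiff_of_subset (Finset.subset_univ _), Finset.card_univ,
      List.toFinset_card_of_nodup hnd]; omega)
  rw [hsign]
  refine IsMoveSign.prod_eq_one (S := S) (k := k) (q.darts.map f) B u (Δ.sign u _) 1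
    (hvs ▸ hnd) (hvs ▸ fun x hx hxB => ?_) (by omega) (by simp; omega)
    (isChain_darts_append (fun a b hab => (hS a b hab).mono (Finset.empty_subset B))
      (Walk.cons h q) 1)
  exact (Finset.mem_sdiff.1 (hBsub hxB)).2 (List.mem_toFinset.2 hx)

end MoveSign

section Token

variable {V : Type*} [DecidableEq V] {k : ℕ} {Γ : SignedGraph V}

lemma tokenAdj_adj_iff {G : SimpleGraph V} {A B : {A : Finset V // A.card = k}} :
    (tokenAdj G k).Adj A B ↔
      ∃ a b T, G.Adj a b ∧ a ∉ T ∧ b ∉ T ∧ A.1 = insert a T ∧ B.1 = insert b T := by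
  constructor
  · rintro ⟨a, b, ha, hb, hab, hs⟩
    have hmem (x : V) : x ∈ A.1 ∧ x ∉ B.1 ∨ x ∈ B.1 ∧ x ∉ A.1 ↔ x = a ∨ x = b := by
      rw [← Finset.mem_symmDiff, hs]; simp
    refine ⟨a, b, A.1 ∩ B.1, hab, ?_, ?_, ?_, ?_⟩ <;> [skip; skip; ext x; ext x] <;>
      simp only [Finset.mem_inter, Finset.mem_insert] <;> grind
  · rintro ⟨a, b, T, hab, ha, hb, hA, hB⟩
    exact ⟨a, b, by simp [hA], by simp [hB], hab,
      by rw [hA, hB, Finset.symmDiff_insert_insert ha hb hab.ne]⟩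

lemma token_sign_eq (Γ : SignedGraph V) {A B : {A : Finset V // A.card = k}} {a b : V}
    {T : Finset V} (ha : a ∉ T) (hb : b ∉ T) (hab : a ≠ b) (hA : A.1 = insert a T)
    (hB : B.1 = insert b T) : (Γ.token k).sign A B = Γ.sign a b := by
  simp only [token, hA, hB, Finset.insert_sdiff_insert' hab ha,
    Finset.insert_sdiff_insert' hab.symm hb, Finset.prod_singleton]

open Finset in
/-- Each edge `ab` of `H` lifts to the `C(n-2, k-1)` edges `{T + a, T + b}` of the token graph. -/
lemma card_edgeFinset_tokenAdj [Fintype V] (H : SimpleGraph V) (hk : 1 ≤ k) :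
    #(tokenAdj H k).edgeFinset = (Fintype.card V - 2).choose (k - 1) * #H.edgeFinset := by
  have hmem {d : H.Dart} {T : Finset V} (hT : T ∈ (univ \ {d.fst, d.snd}).powersetCard (k - 1)) :
      d.fst ∉ T ∧ d.snd ∉ T ∧ T.card + 1 = k := by
    rw [mem_powersetCard, subset_sdiff] at hT
    simp only [disjoint_insert_right, disjoint_singleton_right] at hT
    exact ⟨hT.1.2.1, hT.1.2.2, by omega⟩
  let f : (Σ d : H.Dart, (univ \ {d.fst, d.snd}).powersetCard (k - 1)) → (tokenAdj H k).Dart :=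
    fun ⟨d, T, hT⟩ =>
      ⟨(⟨insert d.fst T, by rw [card_insert_of_notMem (hmem hT).1, (hmem hT).2.2]⟩,
        ⟨insert d.snd T, by rw [card_insert_of_notMem (hmem hT).2.1, (hmem hT).2.2]⟩),
        tokenAdj_adj_iff.2 ⟨_, _, T, d.adj, (hmem hT).1, (hmem hT).2.1, rfl, rfl⟩⟩
  have hf : Function.Bijective f := by
    constructor
    · rintro ⟨d, T, hT⟩ ⟨d', T', hT'⟩ h
      obtain ⟨ha, hb, -⟩ := hmem hT
      obtain ⟨ha', hb', -⟩ := hmem hT'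
      simp only [f, Dart.ext_iff, Prod.ext_iff, Subtype.ext_iff] at h
      have hfst : d.fst = d'.fst := singleton_inj.1 <| by
        rw [← insert_sdiff_insert' d.adj.ne ha,
          ← insert_sdiff_insert' d'.adj.ne ha', h.1, h.2]
      have hsnd : d.snd = d'.snd := singleton_inj.1 <| by
        rw [← insert_sdiff_insert' d.adj.ne.symm hb,
          ← insert_sdiff_insert' d'.adj.ne.symm hb', h.1, h.2]
      refine Sigma.subtype_ext ((Dart.ext_iff _ _).2 (Prod.ext hfst hsnd)) ?_
      show T = T'
      rw [← erase_insert ha, ← erase_insert ha', h.1, hfst]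
    · rintro ⟨⟨A, B⟩, hAB⟩
      obtain ⟨a, b, T, hab, ha, hb, hA, hB⟩ := tokenAdj_adj_iff.1 hAB
      have hT : T ∈ (univ \ {a, b}).powersetCard (k - 1) := by
        have := A.2
        rw [hA, card_insert_of_notMem ha] at this
        simp [mem_powersetCard, subset_sdiff, ha, hb]
        omega
      exact ⟨⟨⟨(a, b), hab⟩, T, hT⟩,
        (Dart.ext_iff _ _).2 (Prod.ext (Subtype.ext hA.symm) (Subtype.ext hB.symm))⟩
  have hcard := Fintype.card_congr (Equiv.ofBijective f hf)
  have hfibre (d : H.Dart) :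
      Fintype.card ((univ \ {d.fst, d.snd}).powersetCard (k - 1)) =
        (Fintype.card V - 2).choose (k - 1) := by
    rw [Fintype.card_coe, card_powersetCard, card_sdiff_of_subset (subset_univ _), card_univ,
      card_pair d.adj.ne]
  rw [Fintype.card_sigma, Finset.sum_congr rfl fun d _ => hfibre d, sum_const, card_univ,
    H.dart_card_eq_twice_card_edges, (tokenAdj H k).dart_card_eq_twice_card_edges,
    smul_eq_mul] at hcard
  linarith

lemma tokenAdj_mono {G H : SimpleGraph V} (h : G ≤ H) : tokenAdj G k ≤ tokenAdj H k :=
  fun _ _ ⟨a, b, ha, hb, hab, hs⟩ => ⟨a, b, ha, hb, h hab, hs⟩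

lemma Balanced.token (hb : Γ.Balanced) : (Γ.token k).Balanced := by
  obtain ⟨s, hs⟩ := hb.exists_isPotential
  refine IsPotential.balanced (s := fun A => ∏ v ∈ A.1, s v) fun A B hAB => ?_
  obtain ⟨a, b, T, hab, ha, hb, hA, hB⟩ := tokenAdj_adj_iff.1 hAB
  change _ = (∏ v ∈ A.1, s v) * ∏ v ∈ B.1, s v
  rw [token_sign_eq Γ ha hb hab.ne hA hB, hs a b hab, hA, hB, Finset.prod_insert ha,
    Finset.prod_insert hb, mul_mul_mul_comm, Int.units_mul_self, mul_one]

open Finset in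
lemma IsBalancingSet.exists_token [Fintype V] (hk : 1 ≤ k) {F : Finset (Sym2 V)}
    (hF : Γ.IsBalancingSet F) :
    ∃ F₂, (Γ.token k).IsBalancingSet F₂ ∧
      F₂.card = (Fintype.card V - 2).choose (k - 1) * F.card := by
  obtain ⟨hsub, hneg, hbal⟩ := hF
  set H := Γ.G.deleteEdges ↑F
  have hle : (tokenAdj H k).edgeFinset ⊆ (tokenAdj Γ.G k).edgeFinset :=
    edgeFinset_mono (tokenAdj_mono (deleteEdges_le _))
  refine ⟨(tokenAdj Γ.G k).edgeFinset \ (tokenAdj H k).edgeFinset, ⟨?_, ?_, ?_⟩, ?_⟩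
  · intro E hE
    exact mem_edgeFinset.1 (mem_sdiff.1 hE).1
  · intro E hE
    simp only [mem_sdiff, mem_edgeFinset] at hE
    induction E using Sym2.ind with | h A B => ?_
    obtain ⟨a, b, T, hab, ha, hb, hA, hB⟩ := tokenAdj_adj_iff.1 hE.1
    have habF : s(a, b) ∈ F := by
      by_contra habF
      exact hE.2 (tokenAdj_adj_iff.2
        ⟨a, b, T, deleteEdges_adj.2 ⟨hab, habF⟩, ha, hb, hA, hB⟩)
    rw [esign_mk, token_sign_eq Γ ha hb hab.ne hA hB, ← esign_mk, hneg _ habF]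
  · have hgraph : (tokenAdj Γ.G k).deleteEdges
        ↑((tokenAdj Γ.G k).edgeFinset \ (tokenAdj H k).edgeFinset) = tokenAdj H k := by
      rw [← edgeSet_inj, edgeSet_deleteEdges, coe_sdiff,
        coe_edgeFinset, coe_edgeFinset,
        Set.sdiff_sdiff_cancel_left (by simpa using hle)]
    have : (Γ.token k).deleteEdges
        ↑((tokenAdj Γ.G k).edgeFinset \ (tokenAdj H k).edgeFinset) =
        (Γ.deleteEdges ↑F).token k := by
      simp only [deleteEdges, token, hgraph]
      rfl
    rw [this]
    exact hbal.token
  · have hFsub : F ⊆ Γ.G.edgeFinset := by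
      intro e he; simpa using hsub he
    rw [card_sdiff_of_subset hle, card_edgeFinset_tokenAdj _ hk, card_edgeFinset_tokenAdj _ hk,
      edgeFinset_deleteEdges, card_sdiff_of_subset hFsub, Nat.mul_sub,
      Nat.sub_sub_self (Nat.mul_le_mul_left _ (card_le_card hFsub))]

/-- The two vertices `{a, b}` of `G` along which the token edge `{T + a, T + b}` moves a token. -/
def tokenDiff : Sym2 {A : Finset V // A.card = k} → Finset V :=
  Sym2.lift ⟨fun A B => symmDiff A.1 B.1, fun A B => symmDiff_comm A.1 B.1⟩

@[simp] lemma tokenDiff_mk (A B : {A : Finset V // A.card = k}) :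
    tokenDiff s(A, B) = symmDiff A.1 B.1 := rfl

open Finset in
lemma IsBalancingSet.exists_of_token [Fintype V] (hk : 1 ≤ k) (hkn : k < Fintype.card V)
    {F' : Finset (Sym2 {A : Finset V // A.card = k})} (hF' : (Γ.token k).IsBalancingSet F') :
    ∃ F, Γ.IsBalancingSet F ∧ F.card ≤ F'.card := by
  obtain ⟨hsub, hneg, hbal⟩ := hF'
  obtain ⟨S₀, hS₀⟩ := hbal.exists_isPotential
  let F := Γ.G.edgeFinset.filter fun e => ∃ E ∈ F', tokenDiff E = e.toFinset
  refine ⟨F, ⟨?_, ?_, ?_⟩, ?_⟩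
  · intro e he
    exact mem_edgeFinset.1 (mem_filter.1 he).1
  · intro e he
    obtain ⟨-, E, hE, hdiff⟩ := mem_filter.1 he
    rw [← hneg E hE]
    induction E using Sym2.ind with | h A B => ?_
    obtain ⟨a, b, T, hab, ha, hb, hA, hB⟩ := tokenAdj_adj_iff.1 (hsub hE)
    obtain rfl : s(a, b) = e := Sym2.toFinset_injective <| by
      rw [← hdiff, tokenDiff_mk, hA, hB, symmDiff_insert_insert ha hb hab.ne, Sym2.toFinset_mk_eq]
    rw [esign_mk, esign_mk, token_sign_eq Γ ha hb hab.ne hA hB]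
  · refine balanced_of_isMoveSign hk hkn
      (S := fun A => if h : A.card = k then S₀ ⟨A, h⟩ else 1) fun a b hab T _ hT ha hb => ?_
    obtain ⟨hab, habF⟩ := deleteEdges_adj.1 hab
    have hcard {x : V} (hx : x ∉ T) : (insert x T).card = k := by rw [card_insert_of_notMem hx, hT]
    let A : {A : Finset V // A.card = k} := ⟨insert a T, hcard ha⟩
    let B : {A : Finset V // A.card = k} := ⟨insert b T, hcard hb⟩
    have hE : s(A, B) ∉ F' := fun hE => habF <| mem_filter.2 ⟨mem_edgeFinset.2 hab,
      _, hE, by rw [tokenDiff_mk, symmDiff_insert_insert ha hb hab.ne, Sym2.toFinset_mk_eq]⟩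
    have hAB : (Γ.token k).sign A B = S₀ A * S₀ B := hS₀ A B (deleteEdges_adj.2
      ⟨tokenAdj_adj_iff.2 ⟨a, b, T, hab, ha, hb, rfl, rfl⟩, hE⟩)
    rw [token_sign_eq (A := A) (B := B) Γ ha hb hab.ne rfl rfl] at hAB
    simp only [dif_pos (hcard ha), dif_pos (hcard hb)]
    exact hAB
  · refine card_le_card_of_forall_subsingleton (fun e E => tokenDiff E = e.toFinset)
      (fun e he => (mem_filter.1 he).2) fun E _ e₁ he₁ e₂ he₂ => ?_
    exact Sym2.toFinset_injective (he₁.2.symm.trans he₂.2)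

end Token

end SignedGraph

/-- `l(Γ) ≤ l(F_k(Γ)) ≤ C(n-2, k-1) · l(Γ)`. -/
theorem frustration_token_bounds {V : Type*} [Fintype V] [DecidableEq V] (n k : ℕ)
    (hn : Fintype.card V = n) (hk1 : 1 ≤ k) (hk2 : k ≤ n - 1) (Γ : SignedGraph V) :
    Γ.frustrationIndex ≤ (Γ.token k).frustrationIndex ∧
    (Γ.token k).frustrationIndex ≤ (n - 2).choose (k - 1) * Γ.frustrationIndex := by
  subst hn
  constructor
  · obtain ⟨F', hF', hcard⟩ := (Γ.token k).exists_isBalancingSet_card_eq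
    obtain ⟨F, hF, hle⟩ := hF'.exists_of_token hk1 (by omega)
    exact hF.frustrationIndex_le.trans (hcard ▸ hle)
  · obtain ⟨F, hF, hcard⟩ := Γ.exists_isBalancingSet_card_eq
    obtain ⟨F₂, hF₂, hcard₂⟩ := hF.exists_token (k := k) hk1
    exact hcard ▸ hcard₂ ▸ hF₂.frustrationIndex_le
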